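/- arXiv:0804.0429 — 2 statements merged into one kernel-verified Lean document; each statement's English description precedes it below -/
import Mathlib

section
/- If R is a local ring and φ a nilpotent R-endomorphism of the semisimple left R-module M with nilpotent Jordan normal base {x_{γ,i}}, then the kernel of the homomorphism Φ((f_γ)) = Σ_γ f_γ(t) ∗ x_{γ,1} equals exactly ⊕_{γ∈Γ} (J(R)[t] + (t^{k_γ})). -/
open Polynomial

/-- A nilpotent Jordan normal base of the left `R`-module `M` with respect to the
endomorphism `φ`: a family `x γ i` (`γ ∈ Γ`, `0 ≤ i < k γ`, 0-based indexing) such that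
each `R • x γ i` is a simple submodule, `M` is the internal direct sum of these submodules,
`φ` shifts within each block (annihilating the last element, i.e. `x γ i = 0` for `i ≥ k γ`),
and the block sizes `k γ` are bounded. -/
structure IsNilpotentJordanBase {R : Type*} [Ring R] {M : Type*} [AddCommGroup M] [Module R M]
    (φ : Module.End R M) {Γ : Type*} (k : Γ → ℕ) (x : Γ → ℕ → M) : Prop where
  k_pos : ∀ γ, 1 ≤ k γ
  simple : ∀ γ, ∀ i < k γ, IsSimpleModule R ↥(Submodule.span R {x γ i})
  indep : iSupIndep fun p : Σ γ : Γ, Fin (k γ) => Submodule.span R {x p.1 p.2.val}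
  spans : (⨆ p : Σ γ : Γ, Fin (k γ), Submodule.span R {x p.1 p.2.val}) = ⊤
  step : ∀ γ i, φ (x γ i) = x γ (i + 1)
  zero_after : ∀ γ i, k γ ≤ i → x γ i = 0
  bounded : ∃ n, ∀ γ, k γ ≤ n

/-- The action of a polynomial `f = a₁ + a₂ t + ⋯ + a_{n+1} tⁿ ∈ R[t]` on `u ∈ M` induced by
the endomorphism `φ`: `f ∗ u = a₁ u + a₂ φ(u) + ⋯ + a_{n+1} φⁿ(u)`. -/
noncomputable def polyAction {R : Type*} [Ring R] {M : Type*} [AddCommGroup M] [Module R M]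
    (φ : Module.End R M) (f : Polynomial R) (u : M) : M :=
  f.sum fun i a => a • (φ ^ i) u

/-- The map `Φ : ⊕_{γ∈Γ} R[t] → M`, `Φ((f_γ)_γ) = Σ_γ f_γ(t) ∗ x_{γ,1}`, associated to a
nilpotent Jordan normal base `x` (whose first block elements are `x γ 0`). -/
noncomputable def jordanPhi {R : Type*} [Ring R] {M : Type*} [AddCommGroup M] [Module R M]
    (φ : Module.End R M) {Γ : Type*} (x : Γ → ℕ → M) (f : Γ →₀ Polynomial R) : M :=
  f.sum fun γ p => polyAction φ p (x γ 0)

/-! By the Jordan base relations, `Φ(f) = Σ_γ Σ_{i < k_γ} (f_γ)_i • x_{γ,i}`, a sum of elements of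
the independent simple submodules `R x_{γ,i}`; so `Φ(f) = 0` iff every coefficient `(f_γ)_i` with
`i < k_γ` annihilates `x_{γ,i}`. Over a local ring the annihilator of a nonzero element consists
of nonunits, which form `J(R)` (a local ring is Dedekind-finite, its only idempotents being `0`
and `1`), while `J(R)` kills every simple module. Finally `f_γ` lies in
`J(R)[t] + (t^{k_γ})` iff its coefficients below `k_γ` lie in `J(R)`. -/

namespace IsLocalRing

variable {R : Type*} [Ring R] [IsLocalRing R]

theorem eq_zero_or_one_of_isIdempotentElem {e : R} (he : IsIdempotentElem e) : e = 0 ∨ e = 1 := by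
  rcases isUnit_or_isUnit_of_add_one (add_sub_cancel e 1) with hu | hu
  · exact Or.inr (hu.mul_left_cancel (by rw [he.eq, mul_one]))
  · exact Or.inl (hu.mul_left_cancel (by rw [sub_mul, one_mul, he.eq, sub_self, mul_zero]))

instance : IsDedekindFiniteMonoid R where
  mul_eq_one_symm {a b} hab := by
    have he : IsIdempotentElem (b * a) := by
      rw [IsIdempotentElem, mul_assoc, ← mul_assoc a, hab, one_mul]
    refine (eq_zero_or_one_of_isIdempotentElem he).resolve_left fun h0 => one_ne_zero (α := R) ?_
    calc (1 : R) = a * b * (a * b) := by rw [hab, one_mul]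
      _ = a * (b * a) * b := by simp only [mul_assoc]
      _ = 0 := by rw [h0, mul_zero, zero_mul]

theorem mem_jacobson_bot_of_not_isUnit {a : R} (ha : ¬IsUnit a) :
    a ∈ Ideal.jacobson (⊥ : Ideal R) := by
  rw [Ideal.mem_jacobson_iff]
  intro y
  have hya : ¬IsUnit (-(y * a)) := fun hu =>
    ha (isUnit_of_mul_isUnit_right ((IsUnit.neg_iff _).mp hu))
  obtain ⟨u, hu⟩ :=
    (isUnit_or_isUnit_of_add_one (a := y * a + 1) (b := -(y * a)) (by abel)).resolve_right hya
  refine ⟨↑u⁻¹, ?_⟩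
  rw [Ideal.mem_bot, mul_assoc, ← mul_add_one, ← hu, Units.inv_mul, sub_self]

theorem mem_jacobson_bot_of_smul_eq_zero {M : Type*} [AddCommGroup M] [Module R M] {x : M}
    (hx : x ≠ 0) {a : R} (hax : a • x = 0) : a ∈ Ideal.jacobson (⊥ : Ideal R) :=
  mem_jacobson_bot_of_not_isUnit fun ha => hx (ha.smul_eq_zero.mp hax)

end IsLocalRing

theorem smul_eq_zero_of_mem_jacobson_bot {R M : Type*} [Ring R] [AddCommGroup M] [Module R M]
    {x : M} [IsSemisimpleModule R (Submodule.span R {x})] {a : R}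
    (ha : a ∈ Ideal.jacobson (⊥ : Ideal R)) : a • x = 0 := by
  rw [Ideal.jacobson_bot] at ha
  have hann : a • (⟨x, Submodule.mem_span_singleton_self x⟩ : Submodule.span R {x}) = 0 :=
    Module.mem_annihilator.mp (IsSemisimpleModule.jacobson_le_annihilator R _ ha) _
  exact congrArg Subtype.val hann

theorem IsLocalRing.smul_eq_zero_iff_mem_jacobson_bot {R M : Type*} [Ring R] [IsLocalRing R]
    [AddCommGroup M] [Module R M] {x : M} [hs : IsSimpleModule R (Submodule.span R {x})] {a : R} :
    a • x = 0 ↔ a ∈ Ideal.jacobson (⊥ : Ideal R) := by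
  have hx : x ≠ 0 := fun h0 =>
    (isSimpleModule_iff_isAtom.mp hs).1 (by rw [h0, Submodule.span_zero_singleton])
  exact ⟨mem_jacobson_bot_of_smul_eq_zero hx, smul_eq_zero_of_mem_jacobson_bot⟩

namespace Polynomial

variable {R : Type*} [Semiring R] {I : Ideal R}

theorem coeff_mem_of_mem_map_C {f : R[X]} (hf : f ∈ I.map C) (n : ℕ) : f.coeff n ∈ I := by
  induction hf using Submodule.span_induction generalizing n with
  | mem _ hg =>
    obtain ⟨a, ha, rfl⟩ := hg
    rw [coeff_C]
    split_ifs
    exacts [ha, I.zero_mem]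
  | zero => simp
  | add _ _ _ _ hf hg => rw [coeff_add]; exact I.add_mem (hf n) (hg n)
  | smul g _ _ hf =>
    rw [smul_eq_mul, coeff_mul]
    exact I.sum_mem fun ij _ => I.mul_mem_left _ (hf ij.2)

theorem mem_map_C_sup_span_X_pow_iff {n : ℕ} {p : R[X]} :
    p ∈ I.map C ⊔ Ideal.span {X ^ n} ↔ ∀ i < n, p.coeff i ∈ I := by
  constructor
  · intro hp i hi
    obtain ⟨q, hq, r, hr, rfl⟩ := Submodule.mem_sup.mp hp
    obtain ⟨g, rfl⟩ := Ideal.mem_span_singleton'.mp hr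
    rw [coeff_add, coeff_mul_X_pow', if_neg (by omega), add_zero]
    exact coeff_mem_of_mem_map_C hq i
  · intro hp
    rw [p.as_sum_support]
    refine Submodule.sum_mem _ fun i _ => ?_
    by_cases hi : i < n
    · refine Ideal.mem_sup_left ?_
      rw [← C_mul_X_pow_eq_monomial, ← X_pow_mul]
      exact Ideal.mul_mem_left _ _ (Ideal.mem_map_of_mem C (hp i hi))
    · refine Ideal.mem_sup_right <|
        Ideal.mem_span_singleton'.mpr ⟨monomial (i - n) (p.coeff i), ?_⟩
      rw [monomial_mul_X_pow, Nat.sub_add_cancel (not_lt.mp hi)]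

end Polynomial

namespace IsNilpotentJordanBase

variable {R M Γ : Type*} [Ring R] [AddCommGroup M] [Module R M] {φ : Module.End R M}
  {k : Γ → ℕ} {x : Γ → ℕ → M}

theorem pow_apply (h : IsNilpotentJordanBase φ k x) (γ : Γ) (i : ℕ) :
    (φ ^ i) (x γ 0) = x γ i := by
  induction i with
  | zero => rfl
  | succ i ih => rw [pow_succ', Module.End.mul_apply, ih, h.step]

theorem polyAction_eq_sum (h : IsNilpotentJordanBase φ k x) (γ : Γ) (p : R[X]) :
    polyAction φ p (x γ 0) = ∑ i ∈ Finset.range (k γ), p.coeff i • x γ i := by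
  rw [polyAction, Polynomial.sum_def]
  simp only [h.pow_apply]
  calc ∑ i ∈ p.support, p.coeff i • x γ i
      = ∑ i ∈ p.support ∪ Finset.range (k γ), p.coeff i • x γ i :=
        Finset.sum_subset Finset.subset_union_left fun i _ hi => by
          rw [notMem_support_iff.mp hi, zero_smul]
    _ = ∑ i ∈ Finset.range (k γ), p.coeff i • x γ i :=
        (Finset.sum_subset Finset.subset_union_right fun i _ hi => by
          rw [h.zero_after γ i (not_lt.mp (Finset.mem_range.not.mp hi)), smul_zero]).symm

theorem jordanPhi_eq_sum (h : IsNilpotentJordanBase φ k x) (f : Γ →₀ R[X]) :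
    jordanPhi φ x f = ∑ q ∈ f.support.sigma fun γ => Finset.univ (α := Fin (k γ)),
      (f q.1).coeff q.2 • x q.1 q.2 := by
  rw [Finset.sum_sigma, jordanPhi, Finsupp.sum]
  refine Finset.sum_congr rfl fun γ _ => ?_
  rw [h.polyAction_eq_sum, Fin.sum_univ_eq_sum_range (fun i => (f γ).coeff i • x γ i)]

theorem jordanPhi_eq_zero_iff (h : IsNilpotentJordanBase φ k x) (f : Γ →₀ R[X]) :
    jordanPhi φ x f = 0 ↔ ∀ γ, ∀ i < k γ, (f γ).coeff i • x γ i = 0 := by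
  rw [h.jordanPhi_eq_sum]
  constructor
  · intro h0 γ i hi
    by_cases hγ : γ ∈ f.support
    · exact (iSupIndep_iff_finsetSum_eq_zero_imp_eq_zero _).mp h.indep _ _
        (fun q _ => Submodule.smul_mem _ _ (Submodule.mem_span_singleton_self _)) h0
        ⟨γ, i, hi⟩ (Finset.mem_sigma.mpr ⟨hγ, Finset.mem_univ _⟩)
    · rw [Finsupp.notMem_support_iff.mp hγ, coeff_zero, zero_smul]
  · intro hf
    exact Finset.sum_eq_zero fun q _ => hf q.1 q.2 q.2.isLt

end IsNilpotentJordanBase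

/-- If `R` is a local ring, the kernel of `Φ` equals exactly
`⊕_{γ∈Γ} (J(R)[t] + (t^{k_γ}))`. -/
theorem stmt_10 {R : Type*} [Ring R] [IsLocalRing R] {M : Type*} [AddCommGroup M] [Module R M]
    (φ : Module.End R M) {Γ : Type*} (k : Γ → ℕ) (x : Γ → ℕ → M)
    (h : IsNilpotentJordanBase φ k x) :
    ∀ f : Γ →₀ Polynomial R, jordanPhi φ x f = 0 ↔
      (∀ γ, f γ ∈ Ideal.map (Polynomial.C : R →+* Polynomial R) (Ideal.jacobson (⊥ : Ideal R))
          ⊔ Ideal.span {(Polynomial.X : Polynomial R) ^ k γ}) := by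
  intro f
  rw [h.jordanPhi_eq_zero_iff]
  refine forall_congr' fun γ => ?_
  rw [Polynomial.mem_map_C_sup_span_X_pow_iff]
  refine forall₂_congr fun i hi => ?_
  have hsimple := h.simple γ i hi
  exact IsLocalRing.smul_eq_zero_iff_mem_jacobson_bot
end

section
/- Let K be an algebraically closed field, V a finite-dimensional K-vector space, φ: V → V a K-linear map with eigenvalues λ₁,…,λ_p, and set m_i = dim ker(φ − λ_i·1_V). Then there exist K-subalgebras M_i ⊆ M_{m_i×m_i}(K[t]) for 1 ≤ i ≤ p such that the centralizer C_φ is a homomorphic image of the direct product K-algebra M₁ × M₂ × ⋯ × M_p. -/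
/-!
Every endomorphism commuting with `φ` preserves the generalized eigenspaces `V_i` of `φ`, so
`C_φ` is the product of the centralizers of the blocks `φ_i = φ|V_i`. Let `t` act on `V_i` by
`φ_i`. Since `φ_i - λ_i` is nilpotent, Nakayama's lemma shows that `V_i` is generated as a
`K[t]`-module by lifts of a basis of `V_i / (φ_i - λ_i) V_i`, a space of dimension
`dim ker (φ_i - λ_i) = m_i`. The centralizer of `φ_i` is `End_{K[t]} V_i`, and for a surjection
`π : K[t]^{m_i} → V_i` every such endomorphism lifts, `K[t]^{m_i}` being free, to a matrix
preserving `ker π`; these matrices form `M_i`.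
-/

open Polynomial Module
open Function LinearMap Submodule

namespace Submodule

variable {R M : Type*} [Semiring R] [AddCommMonoid M] [Module R M]
  {N : Module.End R M} {T : Submodule R M}

theorem sup_range_pow_eq_top (hT : T ≤ T.comap N) (h : T ⊔ range N = ⊤) (k : ℕ) :
    T ⊔ range (N ^ k) = ⊤ := by
  induction k with
  | zero => simp [Module.End.one_eq_id]
  | succ k ih =>
    have : range N ≤ T ⊔ range (N ^ (k + 1)) := calc
      range N = map N (T ⊔ range (N ^ k)) := by rw [ih, map_top]
      _ = map N T ⊔ range (N ^ (k + 1)) := by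
        rw [map_sup, pow_succ', Module.End.mul_eq_comp, range_comp]
      _ ≤ T ⊔ range (N ^ (k + 1)) := sup_le_sup_right (map_le_iff_le_comap.mpr hT) _
    exact eq_top_iff.mpr (h ▸ sup_le le_sup_left this)

theorem eq_top_of_sup_range_eq_top_of_isNilpotent (hN : IsNilpotent N) (hT : T ≤ T.comap N)
    (h : T ⊔ range N = ⊤) : T = ⊤ := by
  obtain ⟨k, hk⟩ := hN
  simpa [hk] using sup_range_pow_eq_top hT h k

theorem exists_fin_span_sup_eq_top {K W : Type*} [DivisionRing K] [AddCommGroup W] [Module K W]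
    (U : Submodule K W) [FiniteDimensional K (W ⧸ U)] {n : ℕ} (hn : finrank K (W ⧸ U) = n) :
    ∃ g : Fin n → W, span K (Set.range g) ⊔ U = ⊤ := by
  let b := Module.finBasisOfFinrankEq K (W ⧸ U) hn
  choose g hg using fun j => U.mkQ_surjective (b j)
  refine ⟨g, ?_⟩
  rw [sup_comm, ← comap_map_mkQ, map_span, ← Set.range_comp,
    show U.mkQ ∘ g = b from funext hg, b.span_eq, comap_top]

end Submodule

theorem Subalgebra.mem_centralizer_singleton_iff {R A : Type*} [CommSemiring R] [Semiring A]
    [Algebra R A] {a x : A} : x ∈ centralizer R {a} ↔ Commute a x := by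
  simp [mem_centralizer_iff, commute_iff_eq]

namespace Module.AEval'

variable {R W : Type*} [CommRing R] [AddCommGroup W] [Module R W] (f : Module.End R W)

theorem span_range_of_comp_eq_top (μ : R) (hnil : IsNilpotent (f - μ • 1)) {ι : Type*}
    (g : ι → W) (hg : span R (Set.range g) ⊔ range (f - μ • 1) = ⊤) :
    span R[X] (Set.range (AEval'.of f ∘ g)) = ⊤ := by
  set S := span R[X] (Set.range (AEval'.of f ∘ g))
  have of_sub (x : W) : AEval'.of f ((f - μ • 1) x) = (X - C μ) • AEval'.of f x := by
    simp [sub_smul, AEval'.X_smul_of]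
  have hcomap : (S.restrictScalars R).comap (AEval'.of f).toLinearMap = ⊤ := by
    refine eq_top_of_sup_range_eq_top_of_isNilpotent hnil (fun x hx => ?_)
      (eq_top_iff.mpr (hg ▸ sup_le_sup_right (span_le.mpr ?_) _))
    · change AEval'.of f ((f - μ • 1) x) ∈ S
      exact of_sub x ▸ S.smul_mem (X - C μ) hx
    · rintro _ ⟨j, rfl⟩
      change AEval'.of f (g j) ∈ S
      exact subset_span ⟨j, rfl⟩
  refine eq_top_iff.mpr fun x _ => ?_
  have : (AEval'.of f).symm x ∈ (S.restrictScalars R).comap (AEval'.of f).toLinearMap :=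
    hcomap ▸ mem_top
  simpa using this

noncomputable def endToCentralizer :
    Module.End R[X] (AEval' f) →ₐ[R] Subalgebra.centralizer R {f} where
  toFun F := ⟨(AEval'.of f).symm.toLinearMap ∘ₗ F.restrictScalars R ∘ₗ
      (AEval'.of f).toLinearMap,
    Subalgebra.mem_centralizer_singleton_iff.mpr <| LinearMap.ext fun w => by
      simp [← AEval'.X_smul_of]⟩
  map_one' := rfl
  map_mul' F G := by ext; simp
  map_zero' := rfl
  map_add' F G := by ext; simp
  commutes' r := by ext; simp

theorem endToCentralizer_surjective : Surjective (endToCentralizer f) := by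
  rintro ⟨F, hF⟩
  have hFf (w : W) : AEval'.of f (F (f w)) = (X : R[X]) • AEval'.of f (F w) := by
    rw [AEval'.X_smul_of, ← Module.End.mul_apply,
      ← (Subalgebra.mem_centralizer_singleton_iff.mp hF).eq, Module.End.mul_apply]
  exact ⟨LinearMap.ofAEval f ((AEval'.of f).toLinearMap ∘ₗ F) hFf,
    Subtype.ext (LinearMap.ext fun _ => rfl)⟩

end Module.AEval'

namespace Matrix

variable {A n : Type*} [CommRing A] [Fintype n] [DecidableEq n]

def stabilizer (N : Submodule A (n → A)) : Subalgebra A (Matrix n n A) where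
  carrier := {B | ∀ v ∈ N, B *ᵥ v ∈ N}
  mul_mem' {B C} hB hC v hv := by rw [← mulVec_mulVec]; exact hB _ (hC v hv)
  one_mem' v hv := by rwa [one_mulVec]
  add_mem' {B C} hB hC v hv := by rw [add_mulVec]; exact N.add_mem (hB v hv) (hC v hv)
  zero_mem' v _ := by rw [zero_mulVec]; exact N.zero_mem
  algebraMap_mem' a v hv := by
    rw [Algebra.algebraMap_eq_smul_one, smul_mulVec, one_mulVec]
    exact N.smul_mem a hv

def stabilizer.toEndQuotient (N : Submodule A (n → A)) :
    stabilizer N →ₐ[A] Module.End A ((n → A) ⧸ N) where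
  toFun B := N.mapQ N (toLin' B) fun v hv => B.2 v hv
  map_one' := linearMap_qext _ (LinearMap.ext fun v => by simp)
  map_mul' B C := linearMap_qext _ (LinearMap.ext fun v =>
    congrArg (Submodule.Quotient.mk (p := N)) (mulVec_mulVec v B.1 C.1).symm)
  map_zero' := linearMap_qext _ (LinearMap.ext fun v => by simp)
  map_add' B C := linearMap_qext _ (LinearMap.ext fun v =>
    congrArg (Submodule.Quotient.mk (p := N)) (add_mulVec B.1 C.1 v))
  commutes' a := linearMap_qext _ (LinearMap.ext fun v => by
    simp [Algebra.algebraMap_eq_smul_one])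

theorem stabilizer.toEndQuotient_surjective (N : Submodule A (n → A)) :
    Surjective (toEndQuotient N) := by
  intro g
  obtain ⟨F, hF⟩ := Module.projective_lifting_property N.mkQ (g ∘ₗ N.mkQ) N.mkQ_surjective
  have hFN (v : n → A) : N.mkQ (F v) = g (N.mkQ v) := congr($hF v)
  have hB : toMatrix' F ∈ stabilizer N := fun v hv => by
    have := hFN v
    rw [mkQ_apply, mkQ_apply, (Submodule.Quotient.mk_eq_zero N).mpr hv, map_zero,
      Submodule.Quotient.mk_eq_zero] at this
    simpa using this
  refine ⟨⟨toMatrix' F, hB⟩, ?_⟩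
  ext v
  simpa [toEndQuotient] using hFN _

end Matrix

theorem Module.End.exists_matrix_subalgebra_surjective {A M n : Type*} [CommRing A]
    [AddCommGroup M] [Module A M] [Fintype n] [DecidableEq n]
    (π : (n → A) →ₗ[A] M) (hπ : Surjective π) :
    ∃ S : Subalgebra A (Matrix n n A), ∃ Φ : S →ₐ[A] Module.End A M, Surjective Φ :=
  let e := (π.quotKerEquivOfSurjective hπ).conjAlgEquiv A
  ⟨Matrix.stabilizer (ker π), e.toAlgHom.comp (Matrix.stabilizer.toEndQuotient _),
    e.surjective.comp (Matrix.stabilizer.toEndQuotient_surjective (ker π))⟩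

theorem Module.End.exists_matrix_subalgebra_surjective_centralizer {K W : Type*} [Field K]
    [AddCommGroup W] [Module K W] [FiniteDimensional K W] (f : Module.End K W) (μ : K)
    (hnil : IsNilpotent (f - μ • 1)) {m : ℕ} (hm : finrank K (ker (f - μ • 1)) = m) :
    ∃ M : Subalgebra K (Matrix (Fin m) (Fin m) K[X]),
      ∃ Φ : M →ₐ[K] Subalgebra.centralizer K {f}, Surjective Φ := by
  have hq : finrank K (W ⧸ range (f - μ • 1)) = m := by
    have := (range (f - μ • 1)).finrank_quotient_add_finrank
    have := (f - μ • 1).finrank_range_add_finrank_ker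
    omega
  obtain ⟨g, hg⟩ := (range (f - μ • 1)).exists_fin_span_sup_eq_top hq
  have hπ : Surjective (Fintype.linearCombination K[X] (AEval'.of f ∘ g)) := by
    rw [← range_eq_top, Fintype.range_linearCombination]
    exact AEval'.span_range_of_comp_eq_top f μ hnil g hg
  obtain ⟨S, Φ, hΦ⟩ := exists_matrix_subalgebra_surjective _ hπ
  exact ⟨S.restrictScalars K, (AEval'.endToCentralizer f).comp (S.ofRestrictScalars K Φ),
    (AEval'.endToCentralizer_surjective f).comp hΦ⟩

def Module.End.piMapAlgHom {R ι : Type*} [CommSemiring R] (M : ι → Type*)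
    [∀ i, AddCommMonoid (M i)] [∀ i, Module R (M i)] :
    (Π i, Module.End R (M i)) →ₐ[R] Module.End R (Π i, M i) where
  toFun := LinearMap.piMap
  map_one' := rfl
  map_mul' _ _ := rfl
  map_zero' := rfl
  map_add' _ _ := rfl
  commutes' _ := rfl

namespace DirectSum.IsInternal

variable {R V ι : Type*} [CommSemiring R] [AddCommMonoid V] [Module R V] [Fintype ι]
  [DecidableEq ι] {W : ι → Submodule R V}

noncomputable def piEquiv (h : IsInternal W) : (Π i, W i) ≃ₗ[R] V :=
  (linearEquivFunOnFintype R ι (fun i => W i)).symm ≪≫ₗ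
    LinearEquiv.ofBijective (coeLinearMap W) h

theorem piEquiv_single (h : IsInternal W) (i : ι) (y : W i) : h.piEquiv (Pi.single i y) = y := by
  change coeLinearMap W ((linearEquivFunOnFintype R ι _).symm (Pi.single i y)) = y
  simp

noncomputable def blockDiag (h : IsInternal W) :
    (Π i, Module.End R (W i)) →ₐ[R] Module.End R V :=
  (h.piEquiv.conjAlgEquiv R).toAlgHom.comp (Module.End.piMapAlgHom _)

theorem blockDiag_restrict (h : IsInternal W) {F : Module.End R V}
    (hF : ∀ i, ∀ x ∈ W i, F x ∈ W i) : h.blockDiag (fun i => F.restrict (hF i)) = F := by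
  change h.piEquiv.toLinearMap ∘ₗ piMap (fun i => F.restrict (hF i)) ∘ₗ
    h.piEquiv.symm.toLinearMap = F
  rw [← LinearMap.comp_assoc, LinearEquiv.comp_toLinearMap_symm_eq]
  refine LinearMap.pi_ext fun i y => ?_
  have : Pi.map (fun j => F.restrict (hF j)) (Pi.single i y) = Pi.single i (F.restrict (hF i) y) :=
    funext (Pi.apply_single (fun j => F.restrict (hF j)) (fun _ => map_zero _) i y)
  simp [this, piEquiv_single]

theorem exists_pi_centralizer_surjective (h : IsInternal W) {φ : Module.End R V}
    (hφ : ∀ i, ∀ x ∈ W i, φ x ∈ W i)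
    (hW : ∀ F, Commute φ F → ∀ i, ∀ x ∈ W i, F x ∈ W i) :
    ∃ Θ : (Π i, Subalgebra.centralizer R {φ.restrict (hφ i)}) →ₐ[R]
      Subalgebra.centralizer R {φ}, Surjective Θ := by
  let C i := Subalgebra.centralizer R {φ.restrict (hφ i)}
  let Θ := h.blockDiag.comp (AlgHom.pi fun i => (C i).val.comp (Pi.evalAlgHom R (fun i => C i) i))
  refine ⟨Θ.codRestrict _ fun c => ?_, fun F => ?_⟩
  · rw [Subalgebra.mem_centralizer_singleton_iff, ← h.blockDiag_restrict hφ]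
    exact (Commute.pi fun i => Subalgebra.mem_centralizer_singleton_iff.mp (c i).2).map _
  · have hF := Subalgebra.mem_centralizer_singleton_iff.mp F.2
    exact ⟨fun i => ⟨F.1.restrict (hW F.1 hF i), Subalgebra.mem_centralizer_singleton_iff.mpr
      (LinearMap.restrict_commute hF _ _)⟩, Subtype.ext (h.blockDiag_restrict (hW F.1 hF))⟩

end DirectSum.IsInternal

namespace Module.End

variable {K V : Type*} [Field K] [AddCommGroup V] [Module K V]

theorem isInternal_maxGenEigenspace [IsAlgClosed K] [FiniteDimensional K V]
    (φ : Module.End K V) {ι : Type*} [DecidableEq ι] (lam : ι → K)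
    (hinj : Function.Injective lam)
    (heig : ∀ μ, φ.HasEigenvalue μ ↔ ∃ i, lam i = μ) :
    DirectSum.IsInternal fun i => φ.maxGenEigenspace (lam i) := by
  refine (DirectSum.isInternal_submodule_iff_iSupIndep_and_iSup_eq_top _).mpr
    ⟨(independent_maxGenEigenspace φ).comp hinj, eq_top_iff.mpr ?_⟩
  rw [← iSup_maxGenEigenspace_eq_top φ]
  refine iSup_le fun μ => ?_
  by_cases hμ : φ.HasEigenvalue μ
  · obtain ⟨i, rfl⟩ := (heig μ).mp hμ
    exact le_iSup (fun i => φ.maxGenEigenspace (lam i)) i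
  · have : ¬ φ.HasUnifEigenvalue μ ⊤ := by
      rwa [hasUnifEigenvalue_iff_hasUnifEigenvalue_one (by simp)]
    exact (not_not.mp this).trans_le bot_le

theorem isNilpotent_restrict_maxGenEigenspace_sub_smul [FiniteDimensional K V]
    (φ : Module.End K V) (μ : K)
    (h : ∀ x ∈ φ.maxGenEigenspace μ, φ x ∈ φ.maxGenEigenspace μ) :
    IsNilpotent (φ.restrict h - μ • 1) := by
  convert isNilpotent_restrict_genEigenspace_top φ μ using 1
  ext
  rfl

theorem finrank_ker_restrict_maxGenEigenspace_sub_smul (φ : Module.End K V) (μ : K)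
    (h : ∀ x ∈ φ.maxGenEigenspace μ, φ x ∈ φ.maxGenEigenspace μ) :
    finrank K (ker (φ.restrict h - μ • 1)) = finrank K (ker (φ - μ • 1)) := by
  rw [← eigenspace_def, ← eigenspace_def, eigenspace, genEigenspace_restrict]
  exact (comapSubtypeEquivOfLe ((φ.genEigenspace μ).monotone le_top)).finrank_eq

end Module.End

/-- For a linear map `φ` of a finite-dimensional vector space over an algebraically closed
field `K`, with eigenvalues `λ₁,…,λ_p` and `m_i = dim ker(φ - λ_i·1)`, there exist
`K`-subalgebras `M_i ⊆ M_{m_i×m_i}(K[t])` such that the centralizer `C_φ` is a homomorphic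
image of the direct product `K`-algebra `M₁ × ⋯ × M_p`. -/
theorem stmt_18 {K : Type*} [Field K] [IsAlgClosed K]
    {V : Type*} [AddCommGroup V] [Module K V] [FiniteDimensional K V]
    (φ : Module.End K V) (p : ℕ) (lam : Fin p → K) (hinj : Function.Injective lam)
    (heig : ∀ μ : K, Module.End.HasEigenvalue φ μ ↔ ∃ i, lam i = μ)
    (m : Fin p → ℕ)
    (hm : ∀ i, m i = Module.finrank K ↥(LinearMap.ker (φ - lam i • 1))) :
    ∃ Msub : (i : Fin p) → Subalgebra K (Matrix (Fin (m i)) (Fin (m i)) (Polynomial K)),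
      ∃ Ψ : ((i : Fin p) → ↥(Msub i)) →ₐ[K]
          ↥(Subalgebra.centralizer K ({φ} : Set (Module.End K V))),
        Function.Surjective Ψ := by
  have hW (F : Module.End K V) (hF : Commute φ F) (i : Fin p) :
      ∀ x ∈ φ.maxGenEigenspace (lam i), F x ∈ φ.maxGenEigenspace (lam i) :=
    fun _ hx => Module.End.mapsTo_maxGenEigenspace_of_comm hF (lam i) hx
  have hφ := hW φ (Commute.refl φ)
  obtain ⟨Θ, hΘ⟩ := (Module.End.isInternal_maxGenEigenspace φ lam hinj heig)
    |>.exists_pi_centralizer_surjective hφ hW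
  choose Msub Φ hΦ using fun i =>
    Module.End.exists_matrix_subalgebra_surjective_centralizer (φ.restrict (hφ i)) (lam i)
      (φ.isNilpotent_restrict_maxGenEigenspace_sub_smul (lam i) (hφ i))
      ((φ.finrank_ker_restrict_maxGenEigenspace_sub_smul (lam i) (hφ i)).trans (hm i).symm)
  exact ⟨Msub, Θ.comp (AlgHom.pi fun i => (Φ i).comp (Pi.evalAlgHom K _ i)),
    hΘ.comp (Surjective.piMap hΦ)⟩
end
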